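/- Define h₀(x) = Σ_{(m+1/2)(n+1/2)>0} sign(m+1/2)·e((τ/2)(2m²+4mn+n²) + nx), summing over integers m, n with m+1/2 and n+1/2 of the same sign. Then h₀ is entire in x and satisfies the difference equation h₀(x+τ) = e(τ/2 + x)·(h₀(x) − θ(x,τ)) + θ(0, 2τ). -/

import Mathlib

open Complex

noncomputable def e (w : ℂ) : ℂ := Complex.exp (2 * Real.pi * Complex.I * w)

noncomputable def theta (z τ : ℂ) : ℂ := ∑' n : ℤ, e (τ * n ^ 2 / 2 + n * z)

noncomputable def thetaD (z τ : ℂ) : ℂ := deriv (fun w => theta w τ) z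

noncomputable def al (τ z : ℂ) : ℝ := z.im / τ.im

noncomputable def sgn (t : ℝ) : ℂ := if 0 < t then 1 else -1

/-- term of the Kronecker-Eisenstein series, indexed by `(m, n) : ℤ × ℤ`. -/
noncomputable def fterm (τ z₁ z₂ : ℂ) (p : ℤ × ℤ) : ℂ :=
  if 0 < (al τ z₁ + p.1) * (al τ z₂ + p.2) then
    sgn (al τ z₁ + p.1) * e (τ * p.1 * p.2 + p.2 * z₁ + p.1 * z₂)
  else 0

noncomputable def fKr (z₁ z₂ τ : ℂ) : ℂ := ∑' p : ℤ × ℤ, fterm τ z₁ z₂ p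

noncomputable def kappa (y x τ : ℂ) : ℂ :=
  ∑' n : ℤ, e (τ * n ^ 2 / 2 + n * x) / (e (n * τ) - e y)

/-- term of the trapezoid series `g`, indexed by `(m, n) : ℤ × ℤ`. -/
noncomputable def gterm (τ z₁ z₂ : ℂ) (p : ℤ × ℤ) : ℂ :=
  if 0 < ((p.2 : ℝ) + al τ z₁) * ((p.1 : ℝ) + al τ z₂) then
    sgn ((p.1 : ℝ) + al τ z₂) *
      e (((p.2 : ℂ) + p.1 / 2) * p.1 * τ + p.1 * z₁ + ((p.1 : ℂ) + p.2) * z₂)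
  else 0

noncomputable def gF (z₁ z₂ τ : ℂ) : ℂ := ∑' p : ℤ × ℤ, gterm τ z₁ z₂ p

noncomputable def g0 (z₁ z₂ τ : ℂ) : ℂ :=
  ∑' m : ℤ, e (τ * m ^ 2 / 2 + m * (z₁ + z₂)) / (1 - e (m * τ + z₂))

/-- term of the series `h₀`, indexed by `(m, n) : ℤ × ℤ`. -/
noncomputable def hterm (τ x : ℂ) (p : ℤ × ℤ) : ℂ :=
  if 0 < ((p.1 : ℝ) + 1 / 2) * ((p.2 : ℝ) + 1 / 2) then
    sgn ((p.1 : ℝ) + 1 / 2) *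
      e (τ / 2 * (2 * p.1 ^ 2 + 4 * p.1 * p.2 + p.2 ^ 2) + p.2 * x)
  else 0

noncomputable def h0 (τ x : ℂ) : ℂ := ∑' p : ℤ × ℤ, hterm τ x p

def notInt (t : ℝ) : Prop := ∀ k : ℤ, t ≠ (k : ℝ)

lemma e_add (w z : ℂ) : e (w + z) = e w * e z := by
  simp [e, mul_add, Complex.exp_add]

lemma e_norm (w : ℂ) : ‖e w‖ = Real.exp (-(2 * Real.pi * w.im)) := by
  rw [e, Complex.norm_exp]
  congr 1
  simp [Complex.mul_re, Complex.mul_im]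
  try ring

lemma e_ne_zero (w : ℂ) : e w ≠ 0 := Complex.exp_ne_zero _

lemma e_neg (w : ℂ) : e (-w) = (e w)⁻¹ := by
  simp [e, Complex.exp_neg, mul_neg]

lemma summable_exp_nat (a b : ℝ) (ha : 0 < a) :
    Summable fun n : ℕ => Real.exp (-a * n ^ 2 + b * n) := by
  apply summable_of_ratio_norm_eventually_le (r := Real.exp (-1)) (by
    rw [Real.exp_lt_one_iff]; norm_num)
  filter_upwards [Filter.eventually_ge_atTop (⌈(b + 1) / a⌉₊)] with n hn
  have hn' : (b + 1) / a ≤ n := le_trans (Nat.le_ceil _) (by exact_mod_cast hn)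
  rw [Real.norm_eq_abs, Real.norm_eq_abs, abs_of_pos (Real.exp_pos _),
    abs_of_pos (Real.exp_pos _), ← Real.exp_add, Real.exp_le_exp]
  have h1 : b + 1 ≤ a * n := by
    rwa [div_le_iff₀ ha, mul_comm] at hn'
  push_cast
  nlinarith [sq_nonneg ((n : ℝ)), ha.le, mul_le_mul_of_nonneg_left h1 (show (0:ℝ) ≤ 2*n + 1 by positivity)]

lemma summable_exp_int (a b : ℝ) (ha : 0 < a) :
    Summable fun n : ℤ => Real.exp (-a * n ^ 2 + b * |(n : ℝ)|) := by
  apply Summable.of_nat_of_neg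
  · simpa using summable_exp_nat a b ha
  · simpa using summable_exp_nat a b ha

-- norm of a theta-type term
lemma theta_term_norm (τ z : ℂ) (n : ℤ) :
    ‖e (τ * n ^ 2 / 2 + n * z)‖ ≤
      Real.exp (-(Real.pi * τ.im) * n ^ 2 + (2 * Real.pi * |z.im|) * |(n : ℝ)|) := by
  rw [e_norm, Real.exp_le_exp]
  have h1 : (τ * n ^ 2 / 2 + n * z).im = τ.im * n ^ 2 / 2 + n * z.im := by
    have e1 : τ * (n : ℂ) ^ 2 / 2 + (n : ℂ) * z
        = (((n : ℝ) ^ 2 / 2 : ℝ) : ℂ) * τ + (((n : ℝ) : ℝ) : ℂ) * z := by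
      push_cast; ring
    rw [e1, Complex.add_im, Complex.im_ofReal_mul, Complex.im_ofReal_mul]
    ring
  rw [h1]
  have h2 : -(n : ℝ) * z.im ≤ |(n : ℝ)| * |z.im| := by
    rw [← abs_neg ((n:ℝ))]
    calc -(n : ℝ) * z.im ≤ |(-(n:ℝ)) * z.im| := le_abs_self _
    _ = |(-(n:ℝ))| * |z.im| := abs_mul _ _
  have hpi := Real.pi_pos
  nlinarith

lemma summable_theta_term (τ z : ℂ) (hτ : 0 < τ.im) :
    Summable fun n : ℤ => e (τ * n ^ 2 / 2 + n * z) := by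
  exact Summable.of_norm_bounded
    (g := fun n : ℤ => Real.exp (-(Real.pi * τ.im) * n ^ 2 + (2 * Real.pi * |z.im|) * |(n : ℝ)|))
    (summable_exp_int _ _ (by positivity)) (theta_term_norm τ z)

lemma theta_hasSum (τ z : ℂ) (hτ : 0 < τ.im) :
    HasSum (fun n : ℤ => e (τ * n ^ 2 / 2 + n * z)) (theta z τ) := by
  rw [theta]; exact (summable_theta_term τ z hτ).hasSum

lemma norm_sgn (t : ℝ) : ‖sgn t‖ = 1 := by
  unfold sgn; split <;> simp

lemma hcond_iff (m n : ℤ) :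
    0 < ((m : ℝ) + 1 / 2) * ((n : ℝ) + 1 / 2) ↔ (0 ≤ m ∧ 0 ≤ n) ∨ (m < 0 ∧ n < 0) := by
  rcases le_or_gt 0 m with hm | hm <;> rcases le_or_gt 0 n with hn | hn
  · have h1 : (0 : ℝ) ≤ m := by exact_mod_cast hm
    have h2 : (0 : ℝ) ≤ n := by exact_mod_cast hn
    constructor
    · intro _; exact Or.inl ⟨hm, hn⟩
    · intro _; nlinarith
  · have h1 : (0 : ℝ) ≤ m := by exact_mod_cast hm
    have h2 : (n : ℝ) ≤ -1 := by exact_mod_cast (show n ≤ -1 by omega)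
    constructor
    · intro h; nlinarith
    · rintro (⟨_, h⟩ | ⟨h, _⟩) <;> omega
  · have h1 : (m : ℝ) ≤ -1 := by exact_mod_cast (show m ≤ -1 by omega)
    have h2 : (0 : ℝ) ≤ n := by exact_mod_cast hn
    constructor
    · intro h; nlinarith
    · rintro (⟨h, _⟩ | ⟨_, h⟩) <;> omega
  · have h1 : (m : ℝ) ≤ -1 := by exact_mod_cast (show m ≤ -1 by omega)
    have h2 : (n : ℝ) ≤ -1 := by exact_mod_cast (show n ≤ -1 by omega)
    constructor
    · intro _; exact Or.inr ⟨hm, hn⟩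
    · intro _; nlinarith

lemma hterm_exp_im (τ x : ℂ) (m n : ℤ) :
    (τ / 2 * (2 * (m : ℂ) ^ 2 + 4 * m * n + n ^ 2) + n * x).im
      = τ.im * ((m : ℝ) ^ 2 + 2 * m * n + n ^ 2 / 2) + n * x.im := by
  have e1 : τ / 2 * (2 * (m : ℂ) ^ 2 + 4 * m * n + n ^ 2) + (n : ℂ) * x
      = ((((m : ℝ) ^ 2 + 2 * m * n + n ^ 2 / 2) : ℝ) : ℂ) * τ + (((n : ℝ) : ℝ) : ℂ) * x := by
    push_cast; ring
  rw [e1, Complex.add_im, Complex.im_ofReal_mul, Complex.im_ofReal_mul]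
  ring

lemma hterm_norm_le (τ x : ℂ) (hτ : 0 < τ.im) (c : ℝ) (hc : |x.im| ≤ c) (p : ℤ × ℤ) :
    ‖hterm τ x p‖ ≤ Real.exp (-(2 * Real.pi * τ.im) * p.1 ^ 2) *
      Real.exp (-(Real.pi * τ.im) * p.2 ^ 2 + (2 * Real.pi * c) * |(p.2 : ℝ)|) := by
  obtain ⟨m, n⟩ := p
  unfold hterm
  dsimp only
  split
  · rename_i h
    have hmn : (0 : ℝ) ≤ (m : ℝ) * n := by
      rcases (hcond_iff m n).mp h with ⟨h1, h2⟩ | ⟨h1, h2⟩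
      · have : (0:ℝ) ≤ m := by exact_mod_cast h1
        have : (0:ℝ) ≤ n := by exact_mod_cast h2
        positivity
      · have h1' : (m : ℝ) < 0 := by exact_mod_cast h1
        have h2' : (n : ℝ) < 0 := by exact_mod_cast h2
        nlinarith
    rw [norm_mul, norm_sgn, one_mul, e_norm, ← Real.exp_add, Real.exp_le_exp,
      hterm_exp_im]
    have hnx : -((n : ℝ) * x.im) ≤ |(n : ℝ)| * c := by
      calc -((n : ℝ) * x.im) ≤ |(n : ℝ) * x.im| := neg_le_abs _
      _ = |(n : ℝ)| * |x.im| := abs_mul _ _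
      _ ≤ |(n : ℝ)| * c := by
          apply mul_le_mul_of_nonneg_left hc (abs_nonneg _)
    have hpi := Real.pi_pos
    nlinarith [mul_nonneg (mul_nonneg hpi.le hτ.le) hmn,
      mul_le_mul_of_nonneg_left hnx (show (0:ℝ) ≤ 2 * Real.pi by positivity)]
  · simp only [norm_zero]; positivity

lemma summable_hterm (τ x : ℂ) (hτ : 0 < τ.im) : Summable (hterm τ x) := by
  apply Summable.of_norm_bounded
    (g := fun p : ℤ × ℤ => Real.exp (-(2 * Real.pi * τ.im) * p.1 ^ 2) *
      Real.exp (-(Real.pi * τ.im) * p.2 ^ 2 + (2 * Real.pi * |x.im|) * |(p.2 : ℝ)|))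
  · apply Summable.mul_of_nonneg
      (f := fun m : ℤ => Real.exp (-(2 * Real.pi * τ.im) * m ^ 2))
      (g := fun n : ℤ => Real.exp (-(Real.pi * τ.im) * n ^ 2 + (2 * Real.pi * |x.im|) * |(n : ℝ)|))
    · simpa using summable_exp_int (2 * Real.pi * τ.im) 0 (by positivity)
    · exact summable_exp_int (Real.pi * τ.im) (2 * Real.pi * |x.im|) (by positivity)
    · intro i; positivity
    · intro i; positivity
  · exact hterm_norm_le τ x hτ _ le_rfl

lemma e_zero : e 0 = 1 := by simp [e]

noncomputable def tt (τ x : ℂ) (p : ℤ × ℤ) : ℂ :=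
  e (τ * ((p.1 : ℂ) + p.2) ^ 2 - τ * (p.2 : ℂ) ^ 2 / 2 + p.2 * x)

noncomputable def G (τ x : ℂ) (p : ℤ × ℤ) : ℂ :=
  if 0 < ((p.1 : ℝ) + 1 / 2) * ((p.2 : ℝ) + 1 / 2) then
    sgn ((p.1 : ℝ) + 1 / 2) * tt τ x (p.1 + 1, p.2 - 1)
  else 0

noncomputable def D1 (τ x : ℂ) (p : ℤ × ℤ) : ℂ :=
  if p.2 = -1 ∧ p.1 ≠ 0 then tt τ x (p.1, -1) else 0

noncomputable def D2 (τ x : ℂ) (p : ℤ × ℤ) : ℂ :=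
  if p.1 = 0 ∧ p.2 ≠ -1 then tt τ x (0, p.2) else 0

lemma hterm_eq_tt (τ x : ℂ) (p : ℤ × ℤ) :
    hterm τ x p =
      if 0 < ((p.1 : ℝ) + 1 / 2) * ((p.2 : ℝ) + 1 / 2) then
        sgn ((p.1 : ℝ) + 1 / 2) * tt τ x p
      else 0 := by
  unfold hterm tt
  split
  · congr 2
    push_cast
    ring
  · rfl

lemma hterm_shift (τ x : ℂ) (p : ℤ × ℤ) :
    hterm τ (x + τ) p = e (τ / 2 + x) * G τ x p := by
  obtain ⟨m, n⟩ := p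
  unfold hterm G tt
  dsimp only
  split
  · rw [show τ / 2 * (2 * (m : ℂ) ^ 2 + 4 * m * n + n ^ 2) + n * (x + τ)
        = (τ / 2 + x) + (τ * (((m + 1 : ℤ) : ℂ) + ((n - 1 : ℤ) : ℂ)) ^ 2
            - τ * ((n - 1 : ℤ) : ℂ) ^ 2 / 2 + ((n - 1 : ℤ) : ℂ) * x) from by push_cast; ring,
      e_add]
    ring
  · rw [mul_zero]

lemma sgn_int_half (a : ℤ) : sgn ((a : ℝ) + 1 / 2) = if 0 ≤ a then 1 else -1 := by
  unfold sgn
  congr 1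
  simp only [eq_iff_iff]
  constructor
  · intro h
    by_contra hc
    have : (a : ℝ) ≤ -1 := by exact_mod_cast (show a ≤ -1 by omega)
    linarith
  · intro h
    have : (0 : ℝ) ≤ a := by exact_mod_cast h
    linarith

lemma key (τ x : ℂ) (p : ℤ × ℤ) :
    G τ x (p.1 - 1, p.2 + 1) = hterm τ x p + (D1 τ x p - D2 τ x p) := by
  obtain ⟨a, b⟩ := p
  rw [hterm_eq_tt]
  unfold G D1 D2
  dsimp only
  have hc1 : (0 < (((a - 1 : ℤ) : ℝ) + 1 / 2) * (((b + 1 : ℤ) : ℝ) + 1 / 2))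
      ↔ ((1 ≤ a ∧ -1 ≤ b) ∨ (a ≤ 0 ∧ b ≤ -2)) := by
    rw [hcond_iff]; omega
  have hc2 : (0 < ((a : ℝ) + 1 / 2) * ((b : ℝ) + 1 / 2))
      ↔ ((0 ≤ a ∧ 0 ≤ b) ∨ (a < 0 ∧ b < 0)) := hcond_iff a b
  have htt : (((a - 1 : ℤ) + 1 : ℤ), ((b + 1 : ℤ) - 1 : ℤ)) = (a, b) := by
    simp
  simp only [hc1, hc2, sgn_int_half, htt]
  have ha : 1 ≤ a ∨ a = 0 ∨ a ≤ -1 := by omega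
  have hb : 0 ≤ b ∨ b = -1 ∨ b ≤ -2 := by omega
  rcases ha with ha | rfl | ha <;> rcases hb with hb | rfl | hb <;>
    split_ifs <;> first | omega | ring

lemma two_tau_im (τ : ℂ) (hτ : 0 < τ.im) : 0 < (2 * τ).im := by
  have : (2 * τ).im = 2 * τ.im := by simp [Complex.mul_im]
  rw [this]; linarith

lemma hasSum_D1 (τ x : ℂ) (hτ : 0 < τ.im) :
    HasSum (D1 τ x) (e (-(τ / 2) - x) * (theta 0 (2 * τ) - e τ)) := by
  set u : ℤ → ℂ := fun a => e (2 * τ * a ^ 2 / 2 + a * 0) with hu_def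
  have hu : HasSum u (theta 0 (2 * τ)) := theta_hasSum (2 * τ) 0 (two_tau_im τ hτ)
  have h1 : HasSum (fun a : ℤ => if a = -1 then u (-1) else 0) (u (-1)) := hasSum_ite_eq _ _
  have h2 := hu.sub h1
  have h2' := (Equiv.subRight (1 : ℤ)).hasSum_iff.mpr h2
  have h3 := h2'.mul_left (e (-(τ / 2) - x))
  have hι : Function.Injective (fun a : ℤ => ((a, -1) : ℤ × ℤ)) := by
    intro a b h
    simpa using h
  have hzero : ∀ p : ℤ × ℤ, p ∉ Set.range (fun a : ℤ => ((a, -1) : ℤ × ℤ)) → D1 τ x p = 0 := by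
    rintro ⟨a, b⟩ hp
    have : b ≠ -1 := by
      intro h
      exact hp ⟨a, by simp [h]⟩
    unfold D1
    rw [if_neg (by tauto)]
  rw [show theta 0 (2 * τ) - e τ = theta 0 (2 * τ) - u (-1) from by
    unfold u; congr 1; congr 1; push_cast; ring]
  apply (hι.hasSum_iff hzero).mp
  convert h3 using 1
  · rfl
  funext a
  simp only [Function.comp_apply, Equiv.subRight_apply]
  by_cases h : a = 0
  · subst h
    simp [D1]
  · unfold D1
    rw [if_pos ⟨rfl, h⟩, if_neg (by omega), sub_zero, ← e_add]
    unfold tt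
    congr 1
    push_cast
    ring

lemma hasSum_D2 (τ x : ℂ) (hτ : 0 < τ.im) :
    HasSum (D2 τ x) (theta x τ - e (τ / 2 - x)) := by
  set v : ℤ → ℂ := fun b => e (τ * b ^ 2 / 2 + b * x) with hv_def
  have hv : HasSum v (theta x τ) := theta_hasSum τ x hτ
  have h1 : HasSum (fun b : ℤ => if b = -1 then v (-1) else 0) (v (-1)) := hasSum_ite_eq _ _
  have h2 := hv.sub h1
  have hι : Function.Injective (fun b : ℤ => ((0, b) : ℤ × ℤ)) := by
    intro a b h
    simpa using h
  have hzero : ∀ p : ℤ × ℤ, p ∉ Set.range (fun b : ℤ => ((0, b) : ℤ × ℤ)) → D2 τ x p = 0 := by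
    rintro ⟨a, b⟩ hp
    have : a ≠ 0 := by
      intro h
      exact hp ⟨b, by simp [h]⟩
    unfold D2
    rw [if_neg (by tauto)]
  rw [show theta x τ - e (τ / 2 - x) = theta x τ - v (-1) from by
    unfold v; congr 1; congr 1; push_cast; ring]
  apply (hι.hasSum_iff hzero).mp
  convert h2 using 1
  · rfl
  funext b
  simp only [Function.comp_apply]
  by_cases h : b = -1
  · subst h
    simp [D2]
  · unfold D2
    rw [if_pos ⟨rfl, h⟩, if_neg (by tauto), sub_zero]
    unfold tt
    unfold v
    congr 1
    push_cast
    ring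

lemma func_eq (τ : ℂ) (hτ : 0 < τ.im) (x : ℂ) :
    h0 τ (x + τ) = e (τ / 2 + x) * (h0 τ x - theta x τ) + theta 0 (2 * τ) := by
  have hh : HasSum (hterm τ x) (h0 τ x) := by
    rw [h0]; exact (summable_hterm τ x hτ).hasSum
  have hD : HasSum (fun p => D1 τ x p - D2 τ x p)
      ((e (-(τ / 2) - x) * (theta 0 (2 * τ) - e τ)) - (theta x τ - e (τ / 2 - x))) :=
    (hasSum_D1 τ x hτ).sub (hasSum_D2 τ x hτ)
  set S : ℂ := h0 τ x + ((e (-(τ / 2) - x) * (theta 0 (2 * τ) - e τ)) - (theta x τ - e (τ / 2 - x)))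
    with hS_def
  have hH : HasSum (fun p : ℤ × ℤ => G τ x (p.1 - 1, p.2 + 1)) S := by
    have := hh.add hD
    convert this using 1
    funext p
    exact key τ x p
  have hG : HasSum (G τ x) S := by
    have hψ := ((Equiv.subRight (1 : ℤ)).prodCongr (Equiv.addRight (1 : ℤ))).hasSum_iff
      (f := G τ x) (a := S)
    apply hψ.mp
    exact hH
  have hshift : HasSum (hterm τ (x + τ)) (e (τ / 2 + x) * S) := by
    have := hG.mul_left (e (τ / 2 + x))
    rw [show hterm τ (x + τ) = fun p => e (τ / 2 + x) * G τ x p from funext (hterm_shift τ x)]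
    exact this
  have := hshift.tsum_eq
  rw [h0, this, hS_def]
  have hA1 : e (τ / 2 + x) * e (-(τ / 2) - x) = 1 := by
    rw [← e_add, show τ / 2 + x + (-(τ / 2) - x) = 0 from by ring, e_zero]
  have hA2 : e (τ / 2 + x) * e (τ / 2 - x) = e τ := by
    rw [← e_add]
    congr 1
    ring
  linear_combination (theta 0 (2 * τ) - e τ) * hA1 + hA2

lemma differentiable_hterm (τ : ℂ) (p : ℤ × ℤ) :
    Differentiable ℂ (fun x => hterm τ x p) := by
  by_cases h : 0 < ((p.1 : ℝ) + 1 / 2) * ((p.2 : ℝ) + 1 / 2)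
  · simp only [hterm, if_pos h]
    apply Differentiable.const_mul
    unfold e
    apply Differentiable.cexp
    fun_prop
  · simp only [hterm, if_neg h]
    exact differentiable_const 0

lemma differentiable_h0 (τ : ℂ) (hτ : 0 < τ.im) : Differentiable ℂ (fun x => h0 τ x) := by
  intro x₀
  have hd : DifferentiableOn ℂ (fun x => h0 τ x) (Metric.ball x₀ 1) := by
    unfold h0
    apply differentiableOn_tsum_of_summable_norm
      (u := fun p : ℤ × ℤ => Real.exp (-(2 * Real.pi * τ.im) * p.1 ^ 2) *
        Real.exp (-(Real.pi * τ.im) * p.2 ^ 2 + (2 * Real.pi * (|x₀.im| + 1)) * |(p.2 : ℝ)|))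
    · apply Summable.mul_of_nonneg
        (f := fun m : ℤ => Real.exp (-(2 * Real.pi * τ.im) * m ^ 2))
        (g := fun n : ℤ => Real.exp (-(Real.pi * τ.im) * n ^ 2
          + (2 * Real.pi * (|x₀.im| + 1)) * |(n : ℝ)|))
      · simpa using summable_exp_int (2 * Real.pi * τ.im) 0 (by positivity)
      · exact summable_exp_int (Real.pi * τ.im) (2 * Real.pi * (|x₀.im| + 1)) (by positivity)
      · intro i; positivity
      · intro i; positivity
    · exact fun p => (differentiable_hterm τ p).differentiableOn
    · exact Metric.isOpen_ball
    · intro p w hw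
      apply hterm_norm_le τ w hτ
      have h1 : |w.im - x₀.im| ≤ ‖w - x₀‖ := by
        simpa using Complex.abs_im_le_norm (w - x₀)
      have h2 : ‖w - x₀‖ < 1 := by
        rw [Metric.mem_ball, Complex.dist_eq] at hw
        exact hw
      have h3 : |w.im| ≤ |x₀.im| + |w.im - x₀.im| := by
        have h4 := abs_add_le x₀.im (w.im - x₀.im)
        have h5 : x₀.im + (w.im - x₀.im) = w.im := by ring
        rwa [h5] at h4
      linarith
  exact hd.differentiableAt (Metric.isOpen_ball.mem_nhds (Metric.mem_ball_self one_pos))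

theorem stmt16 (τ : ℂ) (hτ : 0 < τ.im) :
    Differentiable ℂ (fun x => h0 τ x) ∧
      ∀ x : ℂ, h0 τ (x + τ) =
        e (τ / 2 + x) * (h0 τ x - theta x τ) + theta 0 (2 * τ) := by
  exact ⟨differentiable_h0 τ hτ, func_eq τ hτ⟩
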